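/- arXiv:2210.07777 — 3 statements merged into one kernel-verified Lean document; each statement's English description precedes it below -/
import Mathlib

section
/- For independent random variables A and B on a finite set Ω with i.i.d. copies A' and B', the discrete energy distance ε(A,B) = 2·P(A≠B) − P(A≠A') − P(B≠B') is nonnegative, and ε(A,B) = 0 if and only if A and B have the same distribution. -/
/-!
For independent `X`, `Y` with values in a finite set, `P(X = Y) = ∑ₓ P(X = x) P(Y = x)`.
Applied to `(A, B)`, `(A, A')`, `(B, B')`, with `A'`, `B'` distributed as `A`, `B`, this turns
`ε(A, B)` into `∑ₓ (p x - q x)²`, where `p`, `q` are the mass functions of `A`, `B`.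
-/

open MeasureTheory ProbabilityTheory

lemma setOf_eq_eq_iUnion_preimage_singleton {α β : Type*} (f g : α → β) :
    {a | f a = g a} = ⋃ b, f ⁻¹' {b} ∩ g ⁻¹' {b} := by
  ext a
  simp [eq_comm]

section

variable {Ω₀ Ω : Type*} [MeasurableSpace Ω₀] [Fintype Ω] [MeasurableSpace Ω]
  [MeasurableSingletonClass Ω] {μ : Measure Ω₀} {X Y : Ω₀ → Ω}

lemma ProbabilityTheory.IndepFun.measure_eq_eq_sum (hX : Measurable X) (hY : Measurable Y)
    (h : IndepFun X Y μ) :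
    μ {ω | X ω = Y ω} = ∑ x, μ.map X {x} * μ.map Y {x} := by
  have hdisj : Pairwise (Function.onFun Disjoint fun x : Ω ↦ X ⁻¹' {x} ∩ Y ⁻¹' {x}) :=
    fun x y hxy ↦ Set.disjoint_left.mpr fun ω hx hy ↦ hxy (hx.1.symm.trans hy.1)
  rw [setOf_eq_eq_iUnion_preimage_singleton, measure_iUnion hdisj
    fun x ↦ (hX (measurableSet_singleton x)).inter (hY (measurableSet_singleton x)),
    tsum_fintype]
  refine Finset.sum_congr rfl fun x _ ↦ ?_
  rw [Measure.map_apply hX (measurableSet_singleton x),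
    Measure.map_apply hY (measurableSet_singleton x)]
  exact h.measure_inter_preimage_eq_mul _ _ (measurableSet_singleton x) (measurableSet_singleton x)

lemma ProbabilityTheory.IndepFun.measureReal_ne_eq_one_sub_sum [IsProbabilityMeasure μ]
    (hX : Measurable X) (hY : Measurable Y) (h : IndepFun X Y μ) :
    μ.real {ω | X ω ≠ Y ω} = 1 - ∑ x, (μ.map X).real {x} * (μ.map Y).real {x} := by
  have hfin : ∀ x ∈ Finset.univ, μ.map X {x} * μ.map Y {x} ≠ ⊤ :=
    fun x _ ↦ ENNReal.mul_ne_top (measure_ne_top _ _) (measure_ne_top _ _)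
  change μ.real {ω | X ω = Y ω}ᶜ = _
  rw [probReal_compl_eq_one_sub (measurableSet_eq_fun hX hY), measureReal_def,
    h.measure_eq_eq_sum hX hY, ENNReal.toReal_sum hfin]
  simp only [ENNReal.toReal_mul, measureReal_def]

end

lemma two_mul_one_sub_sum_mul_sub_sub {ι : Type*} (s : Finset ι) (p q : ι → ℝ) :
    2 * (1 - ∑ x ∈ s, p x * q x) - (1 - ∑ x ∈ s, p x * p x) - (1 - ∑ x ∈ s, q x * q x)
      = ∑ x ∈ s, (p x - q x) ^ 2 := by
  have hsq : ∀ x, (p x - q x) ^ 2 = p x * p x + q x * q x - 2 * (p x * q x) := fun x ↦ by ring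
  simp only [hsq, Finset.sum_sub_distrib, Finset.sum_add_distrib, ← Finset.mul_sum]
  ring

/-- For mutually independent random variables `A, B, A', B'` on a finite set `Ω`,
with `A'` an i.i.d. copy of `A` and `B'` an i.i.d. copy of `B`, the discrete energy
distance `ε(A,B) = 2·P(A ≠ B) − P(A ≠ A') − P(B ≠ B')` is nonnegative, and it is
zero iff `A` and `B` have the same distribution. -/
theorem stmt_2 {Ω₀ Ω : Type*} [MeasurableSpace Ω₀] [Fintype Ω]
    [MeasurableSpace Ω] [MeasurableSingletonClass Ω]
    (μ : Measure Ω₀) [IsProbabilityMeasure μ]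
    (A B A' B' : Ω₀ → Ω)
    (hA : Measurable A) (hB : Measurable B) (hA' : Measurable A') (hB' : Measurable B')
    (hindep : iIndepFun ![A, B, A', B'] μ)
    (hAA' : Measure.map A' μ = Measure.map A μ)
    (hBB' : Measure.map B' μ = Measure.map B μ) :
    0 ≤ 2 * (μ {ω | A ω ≠ B ω}).toReal - (μ {ω | A ω ≠ A' ω}).toReal
        - (μ {ω | B ω ≠ B' ω}).toReal
    ∧ (2 * (μ {ω | A ω ≠ B ω}).toReal - (μ {ω | A ω ≠ A' ω}).toReal
        - (μ {ω | B ω ≠ B' ω}).toReal = 0 ↔ Measure.map A μ = Measure.map B μ) := by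
  have hindepAB : IndepFun A B μ := by simpa using hindep.indepFun (i := 0) (j := 1) (by decide)
  have hindepAA' : IndepFun A A' μ := by simpa using hindep.indepFun (i := 0) (j := 2) (by decide)
  have hindepBB' : IndepFun B B' μ := by simpa using hindep.indepFun (i := 1) (j := 3) (by decide)
  have hε : 2 * (μ {ω | A ω ≠ B ω}).toReal - (μ {ω | A ω ≠ A' ω}).toReal
      - (μ {ω | B ω ≠ B' ω}).toReal = ∑ x, ((μ.map A).real {x} - (μ.map B).real {x}) ^ 2 := by
    simp only [← measureReal_def]
    rw [hindepAB.measureReal_ne_eq_one_sub_sum hA hB, hindepAA'.measureReal_ne_eq_one_sub_sum hA hA',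
      hindepBB'.measureReal_ne_eq_one_sub_sum hB hB', hAA', hBB', two_mul_one_sub_sum_mul_sub_sub]
  rw [hε, Finset.sum_eq_zero_iff_of_nonneg fun x _ ↦ sq_nonneg _, ext_iff_measureReal_singleton]
  refine ⟨Finset.sum_nonneg fun x _ ↦ sq_nonneg _, ?_⟩
  simp [sub_eq_zero]
end

section
/- Let A and B be independent random variables on a finite set Ω with probability mass functions p and q, and let g, f : Ω → [0,1]. Then E[|g(A) − f(A)|] − E[|g(B) − f(B)|] ≤ sqrt( ε(A,B) · ∑_{x∈Ω} |g(x) − f(x)|² ), where ε(A,B) = 2·P(A≠B) − P(A≠A') − P(B≠B') is the discrete energy distance (A', B' i.i.d. copies). -/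
/-!
Write `p x = P(A = x)` and `q x = P(B = x)`. For independent `X, Y` with laws `p_X, p_Y` one has
`P(X ≠ Y) = 1 - ∑ₓ p_X x p_Y x`, so the energy distance expands to `ε(A,B) = ∑ₓ (p x - q x)²`.
With `h = |g - f|` the left-hand side is `∑ₓ (p x - q x) h x`, and Cauchy–Schwarz bounds it by
`√(∑ₓ (p x - q x)²) √(∑ₓ h x ²)`.
-/

open MeasureTheory ProbabilityTheory

lemma setOf_eq_eq_iUnion_preimage_singleton_inter {Ω₀ Ω : Type*} [Fintype Ω] (X Y : Ω₀ → Ω) :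
    {ω | X ω = Y ω} = ⋃ x ∈ (Finset.univ : Finset Ω), X ⁻¹' {x} ∩ Y ⁻¹' {x} := by
  ext ω
  simp [eq_comm]

section Discrete

variable {Ω₀ Ω : Type*} [MeasurableSpace Ω₀] [Fintype Ω] [MeasurableSpace Ω]
  [MeasurableSingletonClass Ω] {μ : Measure Ω₀} {X Y : Ω₀ → Ω}

lemma ProbabilityTheory.IndepFun.measureReal_eq_eq_sum_mul (hX : Measurable X) (hY : Measurable Y)
    (hXY : IndepFun X Y μ) [IsFiniteMeasure μ] :
    μ.real {ω | X ω = Y ω} = ∑ x, (μ.map X).real {x} * (μ.map Y).real {x} := by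
  have hdisj : Set.PairwiseDisjoint (↑(Finset.univ : Finset Ω))
      fun x => X ⁻¹' {x} ∩ Y ⁻¹' {x} :=
    fun a _ b _ hab => Set.disjoint_left.mpr fun ω hωa hωb => hab (hωa.1.symm.trans hωb.1)
  rw [setOf_eq_eq_iUnion_preimage_singleton_inter,
    measureReal_biUnion_finset hdisj fun x _ => hX (.singleton x) |>.inter (hY (.singleton x))]
  refine Finset.sum_congr rfl fun x _ => ?_
  rw [map_measureReal_apply hX (.singleton x), map_measureReal_apply hY (.singleton x),
    measureReal_def, hXY.measure_inter_preimage_eq_mul _ _ (.singleton x) (.singleton x),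
    ENNReal.toReal_mul, measureReal_def, measureReal_def]

lemma ProbabilityTheory.IndepFun.measureReal_ne_eq_one_sub_sum_mul [IsProbabilityMeasure μ]
    (hX : Measurable X) (hY : Measurable Y) (hXY : IndepFun X Y μ) :
    μ.real {ω | X ω ≠ Y ω} = 1 - ∑ x, (μ.map X).real {x} * (μ.map Y).real {x} := by
  have hmeas : MeasurableSet {ω | X ω = Y ω} := by
    rw [setOf_eq_eq_iUnion_preimage_singleton_inter]
    exact Finset.univ.measurableSet_biUnion fun x _ =>
      (hX (.singleton x)).inter (hY (.singleton x))
  rw [← hXY.measureReal_eq_eq_sum_mul hX hY, ← probReal_compl_eq_one_sub hmeas]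
  rfl

lemma integral_comp_eq_sum_measureReal_map_singleton [IsFiniteMeasure μ]
    (hX : Measurable X) (h : Ω → ℝ) :
    ∫ ω, h (X ω) ∂μ = ∑ x, (μ.map X).real {x} * h x := by
  rw [← integral_map hX.aemeasurable (measurable_of_countable h).aestronglyMeasurable,
    integral_fintype .of_finite]
  rfl

end Discrete

lemma Finset.sum_sub_sq_eq {ι : Type*} (s : Finset ι) (p q : ι → ℝ) :
    ∑ i ∈ s, (p i - q i) ^ 2
      = ∑ i ∈ s, p i * p i + ∑ i ∈ s, q i * q i - 2 * ∑ i ∈ s, p i * q i := by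
  rw [Finset.mul_sum, ← Finset.sum_add_distrib, ← Finset.sum_sub_distrib]
  exact Finset.sum_congr rfl fun _ _ => by ring

theorem stmt_8_general {Ω₀ Ω : Type*} [MeasurableSpace Ω₀] [Fintype Ω]
    [MeasurableSpace Ω] [MeasurableSingletonClass Ω]
    (μ : Measure Ω₀) [IsProbabilityMeasure μ]
    (A B A' B' : Ω₀ → Ω)
    (hA : Measurable A) (hB : Measurable B) (hA' : Measurable A') (hB' : Measurable B')
    (hindep : iIndepFun (m := fun _ => ‹MeasurableSpace Ω›) ![A, B, A', B'] μ)
    (hAA' : Measure.map A' μ = Measure.map A μ)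
    (hBB' : Measure.map B' μ = Measure.map B μ)
    (g f : Ω → ℝ) :
    (∫ ω, |g (A ω) - f (A ω)| ∂μ) - ∫ ω, |g (B ω) - f (B ω)| ∂μ
      ≤ Real.sqrt ((2 * (μ {ω | A ω ≠ B ω}).toReal - (μ {ω | A ω ≠ A' ω}).toReal
          - (μ {ω | B ω ≠ B' ω}).toReal) * ∑ x, |g x - f x| ^ 2) := by
  set p : Ω → ℝ := fun x => (μ.map A).real {x}
  set q : Ω → ℝ := fun x => (μ.map B).real {x}
  have hAB : IndepFun A B μ := by simpa using hindep.indepFun (i := 0) (j := 1) (by decide)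
  have hAA : IndepFun A A' μ := by simpa using hindep.indepFun (i := 0) (j := 2) (by decide)
  have hBB : IndepFun B B' μ := by simpa using hindep.indepFun (i := 1) (j := 3) (by decide)
  have henergy : 2 * μ.real {ω | A ω ≠ B ω} - μ.real {ω | A ω ≠ A' ω}
      - μ.real {ω | B ω ≠ B' ω} = ∑ x, (p x - q x) ^ 2 := by
    rw [hAB.measureReal_ne_eq_one_sub_sum_mul hA hB, hAA.measureReal_ne_eq_one_sub_sum_mul hA hA',
      hBB.measureReal_ne_eq_one_sub_sum_mul hB hB', hAA', hBB', Finset.sum_sub_sq_eq]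
    ring
  have hdiff : (∫ ω, |g (A ω) - f (A ω)| ∂μ) - ∫ ω, |g (B ω) - f (B ω)| ∂μ
      = ∑ x, (p x - q x) * |g x - f x| := by
    simp only [integral_comp_eq_sum_measureReal_map_singleton hA (fun x => |g x - f x|),
      integral_comp_eq_sum_measureReal_map_singleton hB (fun x => |g x - f x|), sub_mul,
      Finset.sum_sub_distrib, p, q]
  simp only [← measureReal_def, henergy, hdiff]
  rw [Real.sqrt_mul (Finset.sum_nonneg fun _ _ => sq_nonneg _)]
  exact Real.sum_mul_le_sqrt_mul_sqrt _ _ _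

/-- For mutually independent `A, B, A', B'` on a finite set `Ω` with `A' ~ A`,
`B' ~ B`, and `g, f : Ω → [0,1]`:
`E[|g(A) − f(A)|] − E[|g(B) − f(B)|] ≤ sqrt(ε(A,B) · ∑_x |g x − f x|²)`,
where `ε(A,B) = 2·P(A≠B) − P(A≠A') − P(B≠B')`. -/
theorem stmt_8 {Ω₀ Ω : Type*} [MeasurableSpace Ω₀] [Fintype Ω]
    [MeasurableSpace Ω] [MeasurableSingletonClass Ω]
    (μ : Measure Ω₀) [IsProbabilityMeasure μ]
    (A B A' B' : Ω₀ → Ω)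
    (hA : Measurable A) (hB : Measurable B) (hA' : Measurable A') (hB' : Measurable B')
    (hindep : iIndepFun (m := fun _ => ‹MeasurableSpace Ω›) ![A, B, A', B'] μ)
    (hAA' : Measure.map A' μ = Measure.map A μ)
    (hBB' : Measure.map B' μ = Measure.map B μ)
    (g f : Ω → ℝ)
    (hg : ∀ x, g x ∈ Set.Icc (0 : ℝ) 1) (hf : ∀ x, f x ∈ Set.Icc (0 : ℝ) 1) :
    (∫ ω, |g (A ω) - f (A ω)| ∂μ) - ∫ ω, |g (B ω) - f (B ω)| ∂μ
      ≤ Real.sqrt ((2 * (μ {ω | A ω ≠ B ω}).toReal - (μ {ω | A ω ≠ A' ω}).toReal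
          - (μ {ω | B ω ≠ B' ω}).toReal) * ∑ x, |g x - f x| ^ 2) :=
  stmt_8_general μ A B A' B' hA hB hA' hB' hindep hAA' hBB' g f
end

section
/- Energy distance via characteristic functions (finite case, d = 1): let A and B be independent random variables on a finite set Ω ⊂ ℝ with i.i.d. copies A', B'. Then lim_{τ→∞} (1/(2τ)) ∫_{−τ}^{τ} |φ_A(t) − φ_B(t)|² dt = 2·P(A≠B) − P(A≠A') − P(B≠B'), where φ_X(t) = E[e^{itX}]. -/
open MeasureTheory ProbabilityTheory Filter

/-!
With `c x = P(A = x) - P(B = x)`, the difference `φ_A - φ_B` is the trigonometric polynomial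
`∑ₓ c x e^{itx}`, whose squared modulus is `∑_{x,y} c x c y cos(t(x - y))`. The mean of
`cos(td)` over `[-τ, τ]` tends to `1` if `d = 0` and to `0` otherwise, so the limit is
`∑ₓ (c x)²`. On the other side, independence gives `P(X = Y) = ∑ₓ P(X = x) P(Y = x)`, and
expanding the square shows that the energy distance is the same sum.
-/

theorem setOf_eq_eq_biUnion_of_forall_mem {Ω α : Type*} {X Y : Ω → α} {S : Finset α}
    (hS : ∀ ω, X ω ∈ S) :
    {ω | X ω = Y ω} = ⋃ x ∈ S, X ⁻¹' {x} ∩ Y ⁻¹' {x} := by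
  ext ω
  simpa [eq_comm] using fun _ : X ω = Y ω => hS ω

section FiniteRange

variable {Ω α : Type*} [MeasurableSpace Ω] [MeasurableSpace α] [MeasurableSingletonClass α]
  {μ : Measure Ω} {X Y : Ω → α} {S : Finset α}

theorem integral_comp_eq_sum_of_forall_mem {E : Type*} [NormedAddCommGroup E]
    [NormedSpace ℝ E] [CompleteSpace E] [IsFiniteMeasure μ] (hX : Measurable X)
    (hS : ∀ ω, X ω ∈ S) (g : α → E) :
    ∫ ω, g (X ω) ∂μ = ∑ x ∈ S, μ.real (X ⁻¹' {x}) • g x := by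
  have hsum : (fun ω => g (X ω))
      = fun ω => ∑ x ∈ S, (X ⁻¹' {x}).indicator (fun _ => g x) ω := by
    ext ω
    rw [Finset.sum_eq_single_of_mem (X ω) (hS ω) fun x _ hx => ?_]
    · simp
    · exact Set.indicator_of_notMem (by simpa using Ne.symm hx) _
  rw [hsum, integral_finsetSum]
  · exact Finset.sum_congr rfl fun x _ =>
      integral_indicator_const _ (hX (measurableSet_singleton x))
  · exact fun x _ => (integrable_const (g x)).indicator (hX (measurableSet_singleton x))

theorem measureReal_setOf_eq_of_indepFun [IsZeroOrProbabilityMeasure μ] (hX : Measurable X)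
    (hY : Measurable Y) (hXY : IndepFun X Y μ) (hS : ∀ ω, X ω ∈ S) :
    μ.real {ω | X ω = Y ω} = ∑ x ∈ S, μ.real (X ⁻¹' {x}) * μ.real (Y ⁻¹' {x}) := by
  rw [setOf_eq_eq_biUnion_of_forall_mem hS, measureReal_biUnion_finset]
  · refine Finset.sum_congr rfl fun x _ => ?_
    simp only [measureReal_def, hXY.measure_inter_preimage_eq_mul _ _
      (measurableSet_singleton x) (measurableSet_singleton x), ENNReal.toReal_mul]
  · intro x _ y _ hxy
    exact (Set.disjoint_singleton.2 hxy).preimage X |>.mono Set.inter_subset_left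
      Set.inter_subset_left
  · exact fun x _ => (hX (measurableSet_singleton x)).inter (hY (measurableSet_singleton x))

theorem measureReal_setOf_ne_of_indepFun [IsProbabilityMeasure μ] (hX : Measurable X)
    (hY : Measurable Y) (hXY : IndepFun X Y μ) (hS : ∀ ω, X ω ∈ S) :
    μ.real {ω | X ω ≠ Y ω}
      = 1 - ∑ x ∈ S, μ.real (X ⁻¹' {x}) * μ.real (Y ⁻¹' {x}) := by
  have hmeas : MeasurableSet {ω | X ω = Y ω} := by
    rw [setOf_eq_eq_biUnion_of_forall_mem hS]
    exact .biUnion S.countable_toSet fun x _ =>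
      (hX (measurableSet_singleton x)).inter (hY (measurableSet_singleton x))
  rw [← measureReal_setOf_eq_of_indepFun hX hY hXY hS, ← probReal_compl_eq_one_sub hmeas]
  rfl

end FiniteRange

open Complex ComplexConjugate in
theorem norm_sq_sum_mul_exp (S : Finset ℝ) (c : ℝ → ℝ) (t : ℝ) :
    ‖∑ x ∈ S, (c x : ℂ) * exp (I * t * x)‖ ^ 2
      = ∑ x ∈ S, ∑ y ∈ S, c x * c y * Real.cos (t * (x - y)) := by
  have hterm : ∀ x y : ℝ, (c x : ℂ) * exp (I * t * x) * conj ((c y : ℂ) * exp (I * t * y))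
      = ((c x * c y : ℝ) : ℂ) * exp ((t * (x - y) : ℝ) * I) := by
    intro x y
    rw [map_mul, ← exp_conj, mul_mul_mul_comm, ← exp_add]
    simp only [map_mul, conj_I, conj_ofReal]
    push_cast
    ring_nf
  rw [← ofReal_re (_ ^ 2), ofReal_pow, ← mul_conj', map_sum, Finset.sum_mul_sum, re_sum]
  refine Finset.sum_congr rfl fun x _ => ?_
  rw [re_sum]
  refine Finset.sum_congr rfl fun y _ => ?_
  rw [hterm, re_ofReal_mul, exp_ofReal_mul_I_re]

theorem tendsto_mean_integral_cos_mul (d : ℝ) :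
    Tendsto (fun τ : ℝ => (1 / (2 * τ)) * ∫ t in (-τ)..τ, Real.cos (t * d)) atTop
      (nhds (if d = 0 then 1 else 0)) := by
  split_ifs with hd
  · refine tendsto_const_nhds.congr' ?_
    filter_upwards [eventually_ne_atTop 0] with τ hτ
    simp only [hd, mul_zero, Real.cos_zero, intervalIntegral.integral_const, smul_eq_mul, mul_one,
      sub_neg_eq_add]
    field_simp
    ring
  · have hmean : ∀ τ, (1 / (2 * τ)) * ∫ t in (-τ)..τ, Real.cos (t * d)
        = (τ⁻¹ * d⁻¹) * Real.sin (τ * d) := by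
      intro τ
      rw [intervalIntegral.integral_comp_mul_right Real.cos hd, integral_cos, neg_mul,
        Real.sin_neg, smul_eq_mul]
      ring
    simp only [hmean]
    refine Tendsto.zero_mul_isBoundedUnder_le ?_ ?_
    · simpa using tendsto_inv_atTop_zero.mul_const d⁻¹
    · exact isBoundedUnder_of ⟨1, fun τ => by simpa using Real.abs_sin_le_one (τ * d)⟩

open Complex in
theorem tendsto_mean_norm_sq_sum_mul_exp (S : Finset ℝ) (c : ℝ → ℝ) :
    Tendsto (fun τ : ℝ => (1 / (2 * τ)) *
        ∫ t in (-τ)..τ, ‖∑ x ∈ S, (c x : ℂ) * exp (I * t * x)‖ ^ 2)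
      atTop (nhds (∑ x ∈ S, c x ^ 2)) := by
  have hmean : ∀ τ : ℝ, (1 / (2 * τ)) *
      ∫ t in (-τ)..τ, ‖∑ x ∈ S, (c x : ℂ) * exp (I * t * x)‖ ^ 2
      = ∑ x ∈ S, ∑ y ∈ S, c x * c y *
          ((1 / (2 * τ)) * ∫ t in (-τ)..τ, Real.cos (t * (x - y))) := by
    intro τ
    simp only [norm_sq_sum_mul_exp]
    rw [intervalIntegral.integral_finsetSum
      (f := fun x t => ∑ y ∈ S, c x * c y * Real.cos (t * (x - y)))
      fun x _ => (by fun_prop : Continuous _).intervalIntegrable _ _, Finset.mul_sum]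
    refine Finset.sum_congr rfl fun x _ => ?_
    rw [intervalIntegral.integral_finsetSum
      fun y _ => (by fun_prop : Continuous _).intervalIntegrable _ _, Finset.mul_sum]
    refine Finset.sum_congr rfl fun y _ => ?_
    rw [intervalIntegral.integral_const_mul]
    ring
  have hdiag : ∑ x ∈ S, c x ^ 2
      = ∑ x ∈ S, ∑ y ∈ S, c x * c y * (if x - y = 0 then 1 else 0) := by
    simp [sub_eq_zero, sq]
  simp only [hmean, hdiag]
  exact tendsto_finsetSum _ fun x _ => tendsto_finsetSum _ fun y _ =>
    (tendsto_mean_integral_cos_mul (x - y)).const_mul _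

/-- Energy distance via characteristic functions (finite case, `d = 1`): for
mutually independent real-valued random variables `A, B, A', B'` taking finitely
many values, with `A' ~ A` and `B' ~ B`,
`lim_{τ→∞} (1/(2τ)) ∫_{−τ}^{τ} |φ_A(t) − φ_B(t)|² dt
  = 2·P(A≠B) − P(A≠A') − P(B≠B')`. -/
theorem stmt_15 {Ω₀ : Type*} [MeasurableSpace Ω₀]
    (μ : Measure Ω₀) [IsProbabilityMeasure μ]
    (A B A' B' : Ω₀ → ℝ)
    (hA : Measurable A) (hB : Measurable B) (hA' : Measurable A') (hB' : Measurable B')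
    (hfinA : (Set.range A).Finite) (hfinB : (Set.range B).Finite)
    (hindep : iIndepFun ![A, B, A', B'] μ)
    (hAA' : Measure.map A' μ = Measure.map A μ)
    (hBB' : Measure.map B' μ = Measure.map B μ) :
    Tendsto (fun τ : ℝ => (1 / (2 * τ)) *
        ∫ t in (-τ)..τ,
          ‖(∫ ω, Complex.exp (Complex.I * t * A ω) ∂μ)
              - ∫ ω, Complex.exp (Complex.I * t * B ω) ∂μ‖ ^ 2)
      atTop
      (nhds (2 * (μ {ω | A ω ≠ B ω}).toReal - (μ {ω | A ω ≠ A' ω}).toReal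
        - (μ {ω | B ω ≠ B' ω}).toReal)) := by
  set S := (hfinA.union hfinB).toFinset
  have hAS : ∀ ω, A ω ∈ S := fun ω => by simp [S]
  have hBS : ∀ ω, B ω ∈ S := fun ω => by simp [S]
  set a := fun x => μ.real (A ⁻¹' {x})
  set b := fun x => μ.real (B ⁻¹' {x})
  have hchar : ∀ t : ℝ, (∫ ω, Complex.exp (Complex.I * t * A ω) ∂μ)
      - ∫ ω, Complex.exp (Complex.I * t * B ω) ∂μ
      = ∑ x ∈ S, ((a x - b x : ℝ) : ℂ) * Complex.exp (Complex.I * t * x) := by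
    intro t
    rw [integral_comp_eq_sum_of_forall_mem hA hAS fun x => Complex.exp (Complex.I * t * x),
      integral_comp_eq_sum_of_forall_mem hB hBS fun x => Complex.exp (Complex.I * t * x),
      ← Finset.sum_sub_distrib]
    simp only [Complex.real_smul, ← sub_mul, Complex.ofReal_sub, a, b]
  have hA'A : ∀ x, μ.real (A' ⁻¹' {x}) = a x := fun x =>
    congrArg ENNReal.toReal <| IdentDistrib.measure_mem_eq
      ⟨hA'.aemeasurable, hA.aemeasurable, hAA'⟩ (measurableSet_singleton x)
  have hB'B : ∀ x, μ.real (B' ⁻¹' {x}) = b x := fun x =>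
    congrArg ENNReal.toReal <| IdentDistrib.measure_mem_eq
      ⟨hB'.aemeasurable, hB.aemeasurable, hBB'⟩ (measurableSet_singleton x)
  have hlimit : 2 * μ.real {ω | A ω ≠ B ω} - μ.real {ω | A ω ≠ A' ω}
      - μ.real {ω | B ω ≠ B' ω} = ∑ x ∈ S, (a x - b x) ^ 2 := by
    rw [measureReal_setOf_ne_of_indepFun hA hB (hindep.indepFun (i := 0) (j := 1) nofun) hAS,
      measureReal_setOf_ne_of_indepFun hA hA' (hindep.indepFun (i := 0) (j := 2) nofun) hAS,
      measureReal_setOf_ne_of_indepFun hB hB' (hindep.indepFun (i := 1) (j := 3) nofun) hBS]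
    simp only [hA'A, hB'B, sub_sq, Finset.sum_add_distrib, Finset.sum_sub_distrib, mul_assoc,
      ← Finset.mul_sum, ← sq, a, b]
    ring
  simp only [← measureReal_def, hlimit, hchar]
  exact tendsto_mean_norm_sq_sum_mul_exp S fun x => a x - b x
end
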